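/- Let Γ_m < Γ_{m+1} < ⋯ < Γ_n be consecutive skeleton points. Then the longest path length is additive over skeleton points: L[Γ_m, Γ_n] = L[Γ_m, Γ_{m+1}] + ⋯ + L[Γ_{n−1}, Γ_n]. -/

import Mathlib

open MeasureTheory ProbabilityTheory Filter

/-- Configuration: edge indicators. -/
abbrev Cfg := ℤ → ℤ → Bool

/-- There is an edge from `i` to `j`. -/
def Edge (ω : Cfg) (i j : ℤ) : Prop := i < j ∧ ω i j = true

/-- There is a directed path from `i` to `j`. -/
def Leads (ω : Cfg) : ℤ → ℤ → Prop := Relation.TransGen (Edge ω)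

/-- A list of vertices forming a path inside `{a,...,b}`. -/
def IsPathIn (ω : Cfg) (a b : ℤ) (l : List ℤ) : Prop :=
  l ≠ [] ∧ l.Chain' (Edge ω) ∧ ∀ x ∈ l, a ≤ x ∧ x ≤ b

/-- `L ω a b`: maximal number of edges of a path contained in `{a,...,b}`. -/
noncomputable def L (ω : Cfg) (a b : ℤ) : ℕ :=
  sSup {n | ∃ l : List ℤ, IsPathIn ω a b l ∧ l.length = n + 1}

/-- `T ω i j`: maximal number of edges of a path from `i` to `j` (0 if none). -/
noncomputable def T (ω : Cfg) (i j : ℤ) : ℕ :=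
  sSup {n | ∃ l : List ℤ, l.Chain' (Edge ω) ∧ l.head? = some i ∧
    l.getLast? = some j ∧ l.length = n + 1}

/-- The skeleton of the graph. -/
def Skel (ω : Cfg) : Set ℤ :=
  {n | (∀ j, n < j → Leads ω n j) ∧ (∀ j, j < n → Leads ω j n)}

/-- The model hypotheses: independent edges, edge `(i,j)` present w.p. `p (j-i)`. -/
def GraphModel (p : ℕ → ℝ) (μ : Measure Cfg) : Prop :=
  IsProbabilityMeasure μ ∧
  iIndepFun (β := fun _ : ℤ × ℤ => Bool)
    (fun e (ω : Cfg) => ω e.1 e.2) μ ∧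
  (∀ i j : ℤ, i < j → μ {ω | ω i j = true} = ENNReal.ofReal (p (j - i).toNat)) ∧
  (∀ i j : ℤ, j ≤ i → μ {ω | ω i j = true} = 0)

/-!
Let `m` be a skeleton point with `a ≤ m ≤ b`. Cut a path in `[a, b]` into its part below `m` and
its part above `m`. Since every vertex below `m` leads to `m` and `m` leads to every vertex above
it, the lower part extends to a path in `[a, m]` ending at `m` and the upper part to a path in
`[m, b]` starting at `m`, together at least as long as the original path; this gives
`L a b ≤ L a m + L m b`.
Gluing maximal paths of `[a, m]` and `[m, b]` extended in the same way at `m` gives the converse,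
and the theorem follows by induction over the skeleton points.
-/

open Set

section

variable {ω : Cfg} {a b m x y : ℤ} {l s u : List ℤ}

lemma pairwise_lt_of_isChain (h : l.IsChain (Edge ω)) : l.Pairwise (· < ·) :=
  List.isChain_iff_pairwise.mp (h.imp fun _ _ e => e.1)

lemma exists_isChain_of_leads (h : Leads ω x y) : ∃ l, (x :: l ++ [y]).IsChain (Edge ω) := by
  induction h with
  | single e => exact ⟨[], List.isChain_pair.mpr e⟩
  | @tail b c _ e ih =>
    obtain ⟨l, hl⟩ := ih
    exact ⟨l ++ [b], by simpa using hl.append_overlap (List.isChain_pair.mpr e) (by simp)⟩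

lemma mem_Ioo_of_isChain (h : (x :: l ++ [y]).IsChain (Edge ω)) {z : ℤ} (hz : z ∈ l) :
    z ∈ Ioo x y := by
  have := pairwise_lt_of_isChain h
  simp only [List.cons_append, List.pairwise_cons, List.pairwise_append, List.mem_append,
    List.mem_singleton] at this
  exact ⟨this.1 z (.inl hz), this.2.2.2 z hz y rfl⟩

lemma length_le_toNat_add_one (hl : l.IsChain (Edge ω)) (hab : ∀ x ∈ l, x ∈ Icc a b) :
    l.length ≤ (b - a).toNat + 1 := by
  have hnd : l.Nodup := (pairwise_lt_of_isChain hl).imp (ne_of_lt ·)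
  have hsub : l.toFinset ⊆ Finset.Icc a b := fun x hx =>
    Finset.mem_Icc.mpr (hab x (List.mem_toFinset.mp hx))
  have := Finset.card_le_card hsub
  rw [List.toFinset_card_of_nodup hnd, Int.card_Icc] at this
  omega

lemma toNat_mem_upperBounds_L (ω : Cfg) (a b : ℤ) :
    (b - a).toNat ∈ upperBounds {n | ∃ l : List ℤ, IsPathIn ω a b l ∧ l.length = n + 1} := by
  rintro n ⟨l, hl, hn⟩
  have := length_le_toNat_add_one hl.2.1 hl.2.2
  omega

lemma L_self (ω : Cfg) (a : ℤ) : L ω a a = 0 := by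
  refine Nat.le_zero.mp ((csSup_le' (toNat_mem_upperBounds_L ω a a)).trans_eq ?_)
  simp

lemma length_sub_one_le_L (hl : l.IsChain (Edge ω)) (hab : ∀ x ∈ l, x ∈ Icc a b) :
    l.length - 1 ≤ L ω a b := by
  obtain rfl | hne := eq_or_ne l []
  · simp
  · exact le_csSup ⟨_, toNat_mem_upperBounds_L ω a b⟩
      ⟨l, ⟨hne, hl, hab⟩, by have := List.length_pos_iff.mpr hne; omega⟩

lemma exists_isPathIn_length_eq_L (hab : a ≤ b) :
    ∃ l, IsPathIn ω a b l ∧ l.length = L ω a b + 1 := by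
  refine Nat.sSup_mem ?_ ⟨_, toNat_mem_upperBounds_L ω a b⟩
  exact ⟨0, [a], ⟨by simp, List.isChain_singleton a, by simp [hab]⟩, rfl⟩

lemma exists_split_around (m : ℤ) (hl : l.IsChain (Edge ω)) (hab : ∀ x ∈ l, x ∈ Icc a b) :
    ∃ s u : List ℤ, s.IsChain (Edge ω) ∧ (∀ x ∈ s, x ∈ Ico a m) ∧
      u.IsChain (Edge ω) ∧ (∀ y ∈ u, y ∈ Ioc m b) ∧ l.length ≤ s.length + u.length + 1 := by
  have hs : l.takeWhile (· < m) <+: l := List.takeWhile_prefix _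
  have ht : l.dropWhile (· < m) <:+ l := List.dropWhile_suffix _
  have hlen := congrArg List.length (List.takeWhile_append_dropWhile (p := (· < m)) (l := l))
  refine ⟨_, (l.dropWhile (· < m)).tail, hl.prefix hs,
    fun x hx => ⟨(hab x (hs.subset hx)).1, by simpa using List.mem_takeWhile_imp hx⟩,
    (hl.suffix ht).tail, ?_, by simp only [List.length_append, List.length_tail] at hlen ⊢; omega⟩
  have hhead := List.head_dropWhile_not (fun x => decide (x < m)) (l := l)
  generalize l.dropWhile (· < m) = t at ht hhead ⊢
  rcases t with _ | ⟨c, r⟩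
  · simp
  · have hmc : m ≤ c := not_lt.mp (of_decide_eq_false (hhead (List.cons_ne_nil c r)))
    have hcr := List.pairwise_cons.mp (pairwise_lt_of_isChain (hl.suffix ht))
    exact fun y hy => ⟨hmc.trans_lt (hcr.1 y hy), (hab y (ht.subset (.tail c hy))).2⟩

lemma exists_chain_extension_to (hm : ∀ j < m, Leads ω j m) (ham : a ≤ m)
    (hs : s.IsChain (Edge ω)) (hsI : ∀ x ∈ s, x ∈ Ico a m) :
    ∃ s₁ : List ℤ, (s₁ ++ [m]).IsChain (Edge ω) ∧ (∀ x ∈ s₁ ++ [m], x ∈ Icc a m) ∧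
      s.length ≤ s₁.length := by
  rcases s.eq_nil_or_concat with rfl | ⟨s₀, x, rfl⟩
  · exact ⟨[], List.isChain_singleton m, by simp [ham], le_rfl⟩
  rw [List.concat_eq_append] at hs hsI
  have hx := hsI x (by simp)
  obtain ⟨p, hp⟩ := exists_isChain_of_leads (hm x hx.2)
  refine ⟨s₀ ++ x :: p, by simpa using hs.append_overlap hp (by simp), ?_, by simp⟩
  intro z hz
  simp only [List.append_assoc, List.cons_append, List.mem_append, List.mem_cons] at hz
  rcases hz with hz | rfl | hz | rfl | hz
  · exact Ico_subset_Icc_self (hsI z (by simp [hz]))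
  · exact Ico_subset_Icc_self hx
  · have := mem_Ioo_of_isChain hp hz
    exact ⟨hx.1.trans this.1.le, this.2.le⟩
  · exact ⟨ham, le_rfl⟩
  · simp at hz

lemma exists_chain_extension_from (hm : ∀ j, m < j → Leads ω m j) (hmb : m ≤ b)
    (hu : u.IsChain (Edge ω)) (huI : ∀ y ∈ u, y ∈ Ioc m b) :
    ∃ u₁ : List ℤ, (m :: u₁).IsChain (Edge ω) ∧ (∀ y ∈ m :: u₁, y ∈ Icc m b) ∧
      u.length ≤ u₁.length := by
  rcases u with _ | ⟨y, u₀⟩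
  · exact ⟨[], List.isChain_singleton m, by simp [hmb], le_rfl⟩
  have hy := huI y (by simp)
  obtain ⟨p, hp⟩ := exists_isChain_of_leads (hm y hy.1)
  refine ⟨p ++ y :: u₀, by simpa using hp.append_overlap (l₃ := u₀) hu (by simp), ?_, by simp⟩
  intro z hz
  simp only [List.mem_cons, List.mem_append] at hz
  rcases hz with rfl | hz | rfl | hz
  · exact ⟨le_rfl, hmb⟩
  · have := mem_Ioo_of_isChain hp hz
    exact ⟨this.1.le, this.2.le.trans hy.2⟩
  · exact Ioc_subset_Icc_self hy
  · exact Ioc_subset_Icc_self (huI z (.tail y hz))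

lemma L_le_add_L_of_mem_skel (hm : m ∈ Skel ω) (ham : a ≤ m) (hmb : m ≤ b) :
    L ω a b ≤ L ω a m + L ω m b := by
  obtain ⟨l, ⟨-, hl, hlI⟩, hlen⟩ := exists_isPathIn_length_eq_L (ω := ω) (ham.trans hmb)
  obtain ⟨s, u, hs, hsI, hu, huI, hsu⟩ := exists_split_around m hl hlI
  obtain ⟨s₁, hs₁, hs₁I, hss₁⟩ := exists_chain_extension_to hm.2 ham hs hsI
  obtain ⟨u₁, hu₁, hu₁I, huu₁⟩ := exists_chain_extension_from hm.1 hmb hu huI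
  have h₁ := length_sub_one_le_L hs₁ hs₁I
  have h₂ := length_sub_one_le_L hu₁ hu₁I
  simp only [List.length_append, List.length_cons, List.length_nil] at h₁ h₂
  omega

lemma add_L_le_L_of_mem_skel (hm : m ∈ Skel ω) (ham : a ≤ m) (hmb : m ≤ b) :
    L ω a m + L ω m b ≤ L ω a b := by
  obtain ⟨l₁, ⟨-, hl₁, hl₁I⟩, hlen₁⟩ := exists_isPathIn_length_eq_L (ω := ω) ham
  obtain ⟨l₂, ⟨-, hl₂, hl₂I⟩, hlen₂⟩ := exists_isPathIn_length_eq_L (ω := ω) hmb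
  obtain ⟨s, u, hs, hsI, -, huI, hsu⟩ := exists_split_around m hl₁ hl₁I
  obtain ⟨s', u', -, hsI', hu', huI', hsu'⟩ := exists_split_around m hl₂ hl₂I
  have hu : u = [] := List.eq_nil_iff_forall_not_mem.mpr fun y hy =>
    (huI y hy).1.not_ge (huI y hy).2
  have hs' : s' = [] := List.eq_nil_iff_forall_not_mem.mpr fun x hx =>
    (hsI' x hx).2.not_ge (hsI' x hx).1
  subst hu hs'
  obtain ⟨s₁, hs₁, hs₁I, hss₁⟩ := exists_chain_extension_to hm.2 ham hs hsI
  obtain ⟨u₁, hu₁, hu₁I, huu₁⟩ := exists_chain_extension_from hm.1 hmb hu' huI'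
  have := length_sub_one_le_L (hs₁.append_overlap hu₁ (List.cons_ne_nil _ _)) fun x hx => by
    rcases List.mem_append.mp hx with hx | hx
    · exact Icc_subset_Icc_right hmb (hs₁I x hx)
    · exact Icc_subset_Icc_left ham (hu₁I x (.tail m hx))
  simp only [List.length_append, List.length_cons, List.length_nil] at this hsu hsu'
  omega

lemma L_eq_add_L_of_mem_skel (hm : m ∈ Skel ω) (ham : a ≤ m) (hmb : m ≤ b) :
    L ω a b = L ω a m + L ω m b :=
  (L_le_add_L_of_mem_skel hm ham hmb).antisymm (add_L_le_L_of_mem_skel hm ham hmb)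

end

theorem stmt_6_general (ω : Cfg) (n : ℕ) (Γ : ℕ → ℤ)
    (hmono : StrictMono Γ)
    (hskel : ∀ k ≤ n, Γ k ∈ Skel ω) :
    L ω (Γ 0) (Γ n) = ∑ k ∈ Finset.range n, L ω (Γ k) (Γ (k + 1)) := by
  induction n with
  | zero => simp [L_self]
  | succ n ih =>
    rw [Finset.sum_range_succ, ← ih fun k hk => hskel k (by omega)]
    exact L_eq_add_L_of_mem_skel (hskel n n.le_succ) (hmono.monotone n.zero_le)
      (hmono.monotone n.le_succ)

/-- additivity of the longest path length over consecutive
skeleton points. -/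
theorem stmt_6 (ω : Cfg) (n : ℕ) (hn : 0 < n) (Γ : ℕ → ℤ)
    (hmono : StrictMono Γ)
    (hskel : ∀ k ≤ n, Γ k ∈ Skel ω)
    (hconsec : ∀ k < n, ∀ s ∈ Skel ω, Γ k < s → s < Γ (k + 1) → False) :
    L ω (Γ 0) (Γ n) = ∑ k ∈ Finset.range n, L ω (Γ k) (Γ (k + 1)) :=
  stmt_6_general ω n Γ hmono hskel
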